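/- arXiv:2205.04783 — 2 statements merged into one kernel-verified Lean document; each statement's English description precedes it below -/
import Mathlib

section
/- Let (T_1,…,T_{n−1}) be a vine on n ≥ 3 variables, let A and B be the two clusters of T_{n−1}, and let s be either of the two elements of (A ∪ B) ∖ (A ∩ B). For each k ∈ {1,…,n−2}, delete from T_k the unique leaf cluster containing s together with its incident edge, and discard T_{n−1} entirely. Then the resulting sequence of trees (T'_1,…,T'_{n−2}) is a vine on the n−1 variables {1,…,n} ∖ {s}. -/
/-- A *vine* on a finite set `S` of `n = S.card` variables: a sequence of cluster trees
`T_1, …, T_(n-1)`, where the clusters of `T_k` are `k`-element subsets of `S`, `T_k` has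
`n - k + 1` clusters, `T_1` is a tree on the `n` singletons of `S`, for `k ≥ 2` the
clusters of `T_k` are exactly the unions `A ∪ B` over the edges `{A, B}` of `T_(k-1)`,
and any two adjacent clusters of `T_k` intersect in exactly `k - 1` elements. -/
structure Vine (α : Type*) [DecidableEq α] (S : Finset α) where
  /-- the set of clusters (nodes) of the tree `T_k` -/
  clusters : ℕ → Set (Finset α)
  /-- the adjacency (edge) relation of the tree `T_k` -/
  adj : ℕ → Finset α → Finset α → Prop
  adj_symm : ∀ k A B, adj k A B → adj k B A
  adj_ne : ∀ k A B, adj k A B → A ≠ B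
  adj_mem : ∀ k A B, adj k A B → A ∈ clusters k ∧ B ∈ clusters k
  subset_of_mem_clusters : ∀ k A, A ∈ clusters k → A ⊆ S
  card_of_mem_clusters : ∀ k, 1 ≤ k → k ≤ S.card - 1 → ∀ A ∈ clusters k, A.card = k
  ncard_clusters : ∀ k, 1 ≤ k → k ≤ S.card - 1 → (clusters k).ncard = S.card - k + 1
  clusters_one : clusters 1 = {A : Finset α | ∃ i ∈ S, A = {i}}
  clusters_succ : ∀ k, 2 ≤ k → k ≤ S.card - 1 →
    clusters k = {C | ∃ A B, adj (k - 1) A B ∧ C = A ∪ B}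
  card_inter_of_adj : ∀ k, 1 ≤ k → k ≤ S.card - 1 →
    ∀ A B, adj k A B → (A ∩ B).card = k - 1
  isTree : ∀ k, 1 ≤ k → k ≤ S.card - 1 →
    ({ Adj := fun A B : clusters k => adj k A.1 B.1,
       symm := ⟨fun A B h => adj_symm k A.1 B.1 h⟩,
       loopless := ⟨fun A h => adj_ne k A.1 A.1 h rfl⟩ } :
      SimpleGraph (clusters k)).IsTree



private lemma vine_aux_exists_adj {V : Type*} {G : SimpleGraph V} {u v : V}
    (h : G.Reachable u v) (hne : u ≠ v) : ∃ w, G.Adj u w := by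
  obtain ⟨p⟩ := h
  obtain ⟨w, hw, -, -⟩ := p.exists_eq_cons_of_ne hne
  exact ⟨w, hw⟩

private lemma vine_aux_walk_mem_pair {V : Type*} {G : SimpleGraph V} {a b : V}
    (ha : ∀ z, G.Adj a z → z = b) (hb : ∀ z, G.Adj b z → z = a) :
    ∀ {u v : V}, G.Walk u v → (u = a ∨ u = b) → (v = a ∨ v = b) := by
  intro u v p
  induction p with
  | nil => exact id
  | cons h q ih =>
    rename_i x y _
    intro hu
    rcases hu with rfl | rfl
    · exact ih (Or.inr (ha _ h ▸ rfl))
    · exact ih (Or.inl (hb _ h ▸ rfl))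

private lemma vine_aux_not_both_leaves {V : Type*} {G : SimpleGraph V} {a b c : V}
    (hpre : G.Preconnected) (hca : c ≠ a) (hcb : c ≠ b)
    (ha : ∀ z, G.Adj a z → z = b) (hb : ∀ z, G.Adj b z → z = a) : False := by
  obtain ⟨p⟩ := hpre a c
  rcases vine_aux_walk_mem_pair ha hb p (Or.inl rfl) with rfl | rfl
  · exact hca rfl
  · exact hcb rfl

private lemma vine_aux_leaf_not_mem_path {V : Type*} [DecidableEq V] {G : SimpleGraph V} {u v x : V}
    (p : G.Walk u v) (hp : p.IsPath)
    (hx : ∀ z z', G.Adj x z → G.Adj x z' → z = z') (hxu : x ≠ u) (hxv : x ≠ v) :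
    x ∉ p.support := by
  intro hmem
  have hspec := p.take_spec hmem
  obtain ⟨b, hadjb, q2, hq2⟩ := (p.dropUntil x hmem).exists_eq_cons_of_ne hxv
  obtain ⟨a, hadja, q1, hq1⟩ := (p.takeUntil x hmem).reverse.exists_eq_cons_of_ne hxu
  have hab : a = b := hx a b hadja hadjb
  have hnodup : (p.support).Nodup := hp.support_nodup
  rw [← hspec, SimpleGraph.Walk.support_append] at hnodup
  have hdisj := (List.nodup_append.mp hnodup).2.2
  apply hdisj a ?_ a ?_ rfl
  · have : a ∈ (p.takeUntil x hmem).reverse.support := by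
      rw [hq1]; simp [SimpleGraph.Walk.support_cons]
    rwa [SimpleGraph.Walk.support_reverse, List.mem_reverse] at this
  · rw [hq2, hab]
    simp [SimpleGraph.Walk.support_cons]

private lemma vine_aux_reach {β : Type*} {P Q : β → Prop}
    (G : SimpleGraph {x // P x}) (G' : SimpleGraph {x // Q x})
    (hAdj : ∀ (a b : {x // P x}) (ha : Q a.1) (hb : Q b.1),
      G.Adj a b → G'.Adj ⟨a.1, ha⟩ ⟨b.1, hb⟩) :
    ∀ {a b : {x // P x}} (q : G.Walk a b), (∀ z ∈ q.support, Q z.1) →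
      ∀ (ha : Q a.1) (hb : Q b.1), G'.Reachable ⟨a.1, ha⟩ ⟨b.1, hb⟩ := by
  intro a b q
  induction q with
  | nil => intro _ ha hb; exact SimpleGraph.Reachable.refl _
  | cons h q ih =>
    intro hq ha hb
    rename_i c d e
    have hc : Q d.1 := hq d (by simp [SimpleGraph.Walk.support_cons])
    exact ((hAdj _ _ ha hc h).reachable).trans
      (ih (fun z hz => hq z (by simp [SimpleGraph.Walk.support_cons, hz])) hc hb)

/-- The tree `T_k` of a vine, as a `SimpleGraph` on the clusters of level `k`. -/
private def vineGraph {α : Type*} [DecidableEq α] {S : Finset α} (W : Vine α S) (k : ℕ) :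
    SimpleGraph ↥(W.clusters k) :=
  { Adj := fun A B => W.adj k A.1 B.1,
    symm := ⟨fun A B h => W.adj_symm k A.1 B.1 h⟩,
    loopless := ⟨fun A h => W.adj_ne k A.1 A.1 h rfl⟩ }

/-- Let `A` and `B` be the two clusters of the last tree `T_(n-1)` of a vine on a set
`S` of `n ≥ 3` variables and let `s` be either of the two elements of
`(A ∪ B) \ (A ∩ B)`. Deleting from each `T_k` (`1 ≤ k ≤ n - 2`) the unique leaf cluster
containing `s` together with its incident edge, and discarding `T_(n-1)` entirely,
yields a vine on the `n - 1` variables `S \ {s}`. -/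
theorem vine_delete_leaf_is_vine {α : Type*} [DecidableEq α] (S : Finset α)
    (n : ℕ) (hn : 3 ≤ n) (hS : S.card = n) (W : Vine α S)
    (A B : Finset α)
    (hA : A ∈ W.clusters (n - 1)) (hB : B ∈ W.clusters (n - 1)) (hAB : A ≠ B)
    (s : α) (hs : s ∈ (A ∪ B) \ (A ∩ B)) :
    ∃ W' : Vine α (S.erase s),
      (∀ k, 1 ≤ k → k ≤ n - 2 →
        W'.clusters k = {C | C ∈ W.clusters k ∧ s ∉ C}) ∧
      (∀ k, 1 ≤ k → k ≤ n - 2 →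
        ∀ C D, (W'.adj k C D ↔ W.adj k C D ∧ s ∉ C ∧ s ∉ D)) := by
  classical
  have hsS : s ∈ S := by
    have h1 := (Finset.mem_sdiff.mp hs).1
    rcases Finset.mem_union.mp h1 with h | h
    · exact W.subset_of_mem_clusters _ _ hA h
    · exact W.subset_of_mem_clusters _ _ hB h
  have hcard' : (S.erase s).card = n - 1 := by rw [Finset.card_erase_of_mem hsS, hS]
  have hfin : ∀ j, 1 ≤ j → j ≤ n - 1 → (W.clusters j).Finite := by
    intro j h1 h2
    apply Set.finite_of_ncard_ne_zero
    rw [W.ncard_clusters j h1 (by omega)]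
    omega
  -- top level: exactly one of the two clusters of `T_(n-1)` contains `s`
  have hP_top : ∃! X, X ∈ W.clusters (n - 1) ∧ s ∈ X := by
    have h2 : W.clusters (n - 1) = {A, B} := by
      symm
      apply Set.eq_of_subset_of_ncard_le
      · rintro C hC
        simp only [Set.mem_insert_iff, Set.mem_singleton_iff] at hC
        rcases hC with rfl | rfl
        · exact hA
        · exact hB
      · rw [W.ncard_clusters (n - 1) (by omega) (by omega), Set.ncard_pair hAB]; omega
      · exact hfin (n - 1) (by omega) (by omega)
    obtain ⟨hs1, hs2⟩ := Finset.mem_sdiff.mp hs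
    rcases Finset.mem_union.mp hs1 with hsa | hsb
    · refine ⟨A, ⟨hA, hsa⟩, ?_⟩
      rintro C ⟨hC, hsC⟩
      rw [h2] at hC
      simp only [Set.mem_insert_iff, Set.mem_singleton_iff] at hC
      rcases hC with rfl | rfl
      · rfl
      · exact absurd (Finset.mem_inter.mpr ⟨hsa, hsC⟩) hs2
    · refine ⟨B, ⟨hB, hsb⟩, ?_⟩
      rintro C ⟨hC, hsC⟩
      rw [h2] at hC
      simp only [Set.mem_insert_iff, Set.mem_singleton_iff] at hC
      rcases hC with rfl | rfl
      · exact absurd (Finset.mem_inter.mpr ⟨hsC, hsb⟩) hs2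
      · rfl
  -- the downward induction step
  have step : ∀ j, 1 ≤ j → j ≤ n - 2 →
      (∃! X, X ∈ W.clusters (j + 1) ∧ s ∈ X) →
      (∃! X, X ∈ W.clusters j ∧ s ∈ X) ∧
      (∀ X Z Z', s ∈ X → W.adj j X Z → W.adj j X Z' → Z = Z') := by
    intro j h1 h2 hP1
    obtain ⟨X, ⟨hXmem, hXs⟩, hXuniq⟩ := hP1
    have hjS : j ≤ S.card - 1 := by omega
    have htree : (vineGraph W j).IsTree := W.isTree j h1 hjS
    haveI : Fintype ↥(W.clusters j) := (hfin j h1 (by omega)).fintype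
    have hcardV : Fintype.card ↥(W.clusters j) = n - j + 1 := by
      rw [← Nat.card_eq_fintype_card, Nat.card_coe_set_eq,
        W.ncard_clusters j h1 hjS, hS]
    have hedge : (vineGraph W j).edgeFinset.card + 1 = n - j + 1 := by
      rw [htree.card_edgeFinset, hcardV]
    set f : Sym2 ↥(W.clusters j) → Finset α :=
      Sym2.lift ⟨fun a b => a.1 ∪ b.1, fun a b => Finset.union_comm _ _⟩ with hf
    have hsucc := W.clusters_succ (j + 1) (by omega) (by omega)
    simp only [Nat.add_sub_cancel] at hsucc
    have himg : ↑((vineGraph W j).edgeFinset.image f) = W.clusters (j + 1) := by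
      ext C
      simp only [Finset.coe_image, Set.mem_image, Finset.mem_coe,
        SimpleGraph.mem_edgeFinset, hsucc, Set.mem_setOf_eq]
      constructor
      · rintro ⟨e, he, rfl⟩
        induction e using Sym2.ind with
        | _ a b => exact ⟨a.1, b.1, (SimpleGraph.mem_edgeSet _).mp he, rfl⟩
      · rintro ⟨A1, B1, hadj, rfl⟩
        exact ⟨s(⟨A1, (W.adj_mem j A1 B1 hadj).1⟩, ⟨B1, (W.adj_mem j A1 B1 hadj).2⟩),
          (SimpleGraph.mem_edgeSet _).mpr hadj, rfl⟩
    have hinj : Set.InjOn f ↑(vineGraph W j).edgeFinset := by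
      apply Finset.injOn_of_card_image_eq
      have h5 : ((vineGraph W j).edgeFinset.image f).card = n - j := by
        rw [← Set.ncard_coe_finset, himg,
          W.ncard_clusters (j + 1) (by omega) (by omega), hS]
        omega
      omega
    rw [hsucc] at hXmem
    have hXd : ∃ A0 B0, W.adj j A0 B0 ∧ X = A0 ∪ B0 ∧ s ∈ A0 := by
      obtain ⟨A0, B0, hadj, rfl⟩ := hXmem
      rcases Finset.mem_union.mp hXs with h | h
      · exact ⟨A0, B0, hadj, rfl, h⟩
      · exact ⟨B0, A0, W.adj_symm _ _ _ hadj, Finset.union_comm _ _, h⟩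
    obtain ⟨A0, B0, hadj0, hXeq, hsA0⟩ := hXd
    set a0 : ↥(W.clusters j) := ⟨A0, (W.adj_mem _ _ _ hadj0).1⟩ with ha0
    set b0 : ↥(W.clusters j) := ⟨B0, (W.adj_mem _ _ _ hadj0).2⟩ with hb0
    have hedge_mem : ∀ (a b : ↥(W.clusters j)), W.adj j a.1 b.1 →
        s(a, b) ∈ (vineGraph W j).edgeFinset := fun a b h =>
      SimpleGraph.mem_edgeFinset.mpr ((SimpleGraph.mem_edgeSet _).mpr h)
    have huniq_edge : ∀ (a b : ↥(W.clusters j)), W.adj j a.1 b.1 → s ∈ a.1 ∪ b.1 →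
        (a = a0 ∧ b = b0) ∨ (a = b0 ∧ b = a0) := by
      intro a b hab hsab
      have hmem1 : a.1 ∪ b.1 ∈ W.clusters (j + 1) := by
        rw [hsucc]; exact ⟨a.1, b.1, hab, rfl⟩
      have hXe : a.1 ∪ b.1 = X := hXuniq _ ⟨hmem1, hsab⟩
      have heq : s(a, b) = s(a0, b0) := by
        apply hinj (hedge_mem a b hab) (hedge_mem a0 b0 hadj0)
        show a.1 ∪ b.1 = A0 ∪ B0
        rw [hXe, hXeq]
      exact Sym2.eq_iff.mp heq
    have hnbr : ∀ (c : ↥(W.clusters j)), ∃ d : ↥(W.clusters j), W.adj j c.1 d.1 := by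
      intro c
      obtain ⟨d, hd⟩ := Fintype.exists_ne_of_one_lt_card (by rw [hcardV]; omega) c
      obtain ⟨w, hw⟩ := vine_aux_exists_adj (htree.isConnected.preconnected c d) (Ne.symm hd)
      exact ⟨w, hw⟩
    have hsB0 : s ∉ B0 := by
      intro hsB0
      have hlva : ∀ z, (vineGraph W j).Adj a0 z → z = b0 := by
        intro z hz
        rcases huniq_edge a0 z hz (Finset.mem_union_left _ hsA0) with ⟨-, h⟩ | ⟨h, -⟩
        · exact h
        · exact absurd (congrArg Subtype.val h) (W.adj_ne _ _ _ hadj0)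
      have hlvb : ∀ z, (vineGraph W j).Adj b0 z → z = a0 := by
        intro z hz
        rcases huniq_edge b0 z hz (Finset.mem_union_left _ hsB0) with ⟨h, -⟩ | ⟨-, h⟩
        · exact absurd (congrArg Subtype.val h).symm (W.adj_ne _ _ _ hadj0)
        · exact h
      have hc3 : ∃ c : ↥(W.clusters j), c ≠ a0 ∧ c ≠ b0 := by
        by_contra hcon
        push_neg at hcon
        have hsub : (Finset.univ : Finset ↥(W.clusters j)) ⊆ {a0, b0} := by
          intro c _
          rcases Classical.em (c = a0) with rfl | h
          · simp
          · simp [hcon c h]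
        have hle := Finset.card_le_card hsub
        rw [Finset.card_univ, hcardV] at hle
        have h2' : ({a0, b0} : Finset ↥(W.clusters j)).card ≤ 2 := by
          apply (Finset.card_insert_le _ _).trans
          simp
        omega
      obtain ⟨c, hc1, hc2⟩ := hc3
      exact vine_aux_not_both_leaves htree.isConnected.preconnected hc1 hc2 hlva hlvb
    constructor
    · refine ⟨A0, ⟨a0.2, hsA0⟩, ?_⟩
      rintro C ⟨hC, hsC⟩
      obtain ⟨d, hd⟩ := hnbr ⟨C, hC⟩
      rcases huniq_edge ⟨C, hC⟩ d hd (Finset.mem_union_left _ hsC) with ⟨h, -⟩ | ⟨h, -⟩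
      · exact congrArg Subtype.val h
      · exact absurd ((show C = B0 from congrArg Subtype.val h) ▸ hsC) hsB0
    · intro Y Z Z' hsY hZ hZ'
      have hYm := (W.adj_mem _ _ _ hZ).1
      have hZm := (W.adj_mem _ _ _ hZ).2
      have hZ'm := (W.adj_mem _ _ _ hZ').2
      have key : ∀ (Z1 : Finset α) (hm : Z1 ∈ W.clusters j),
          ((⟨Y, hYm⟩ : ↥(W.clusters j)) = a0 ∧ (⟨Z1, hm⟩ : ↥(W.clusters j)) = b0) ∨
          ((⟨Y, hYm⟩ : ↥(W.clusters j)) = b0 ∧ (⟨Z1, hm⟩ : ↥(W.clusters j)) = a0) →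
          Z1 = B0 := by
        rintro Z1 hm (⟨-, h⟩ | ⟨h, -⟩)
        · exact congrArg Subtype.val h
        · exact absurd ((show Y = B0 from congrArg Subtype.val h) ▸ hsY) hsB0
      rw [key Z hZm (huniq_edge ⟨Y, hYm⟩ ⟨Z, hZm⟩ hZ (Finset.mem_union_left _ hsY)),
        key Z' hZ'm (huniq_edge ⟨Y, hYm⟩ ⟨Z', hZ'm⟩ hZ' (Finset.mem_union_left _ hsY))]
  have keyP0 : ∀ d j, j + d = n - 1 → 1 ≤ j → ∃! X, X ∈ W.clusters j ∧ s ∈ X := by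
    intro d
    induction d with
    | zero =>
      intro j hj _
      have hjeq : j = n - 1 := by omega
      rw [hjeq]
      exact hP_top
    | succ d ih =>
      intro j hj h1
      exact (step j h1 (by omega) (ih (j + 1) (by omega) (by omega))).1
  have keyP : ∀ j, 1 ≤ j → j ≤ n - 1 → ∃! X, X ∈ W.clusters j ∧ s ∈ X :=
    fun j h1 h2 => keyP0 (n - 1 - j) j (by omega) h1
  have keyQ : ∀ j, 1 ≤ j → j ≤ n - 2 →
      ∀ X Z Z', s ∈ X → W.adj j X Z → W.adj j X Z' → Z = Z' :=
    fun j h1 h2 => (step j h1 h2 (keyP (j + 1) (by omega) (by omega))).2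
  refine ⟨{
    clusters := fun k => {C | C ∈ W.clusters k ∧ s ∉ C}
    adj := fun k C D => W.adj k C D ∧ s ∉ C ∧ s ∉ D
    adj_symm := by rintro k A' B' ⟨h1, h2, h3⟩; exact ⟨W.adj_symm _ _ _ h1, h3, h2⟩
    adj_ne := fun k A' B' h => W.adj_ne k A' B' h.1
    adj_mem := fun k A' B' h =>
      ⟨⟨(W.adj_mem k _ _ h.1).1, h.2.1⟩, ⟨(W.adj_mem k _ _ h.1).2, h.2.2⟩⟩
    subset_of_mem_clusters := fun k C hC x hx =>
      Finset.mem_erase.mpr ⟨fun he => hC.2 (he ▸ hx), W.subset_of_mem_clusters k C hC.1 hx⟩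
    card_of_mem_clusters := by
      intro k h1 h2 C hC
      exact W.card_of_mem_clusters k h1 (by omega) C hC.1
    ncard_clusters := by
      intro k h1 h2
      rw [hcard'] at h2
      show ({C | C ∈ W.clusters k ∧ s ∉ C} : Set (Finset α)).ncard = (S.erase s).card - k + 1
      rw [hcard']
      obtain ⟨X, ⟨hXm, hXs⟩, hXu⟩ := keyP k h1 (by omega)
      have hset : {C | C ∈ W.clusters k ∧ s ∉ C} = W.clusters k \ {X} := by
        ext C
        simp only [Set.mem_setOf_eq, Set.mem_diff, Set.mem_singleton_iff]
        constructor
        · rintro ⟨hC, hsC⟩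
          exact ⟨hC, fun h => hsC (h ▸ hXs)⟩
        · rintro ⟨hC, hCX⟩
          exact ⟨hC, fun hsC => hCX (hXu C ⟨hC, hsC⟩)⟩
      rw [hset, Set.ncard_diff_singleton_of_mem hXm,
        W.ncard_clusters k h1 (by omega), hS]
      omega
    clusters_one := by
      ext C
      simp only [Set.mem_setOf_eq, W.clusters_one, Finset.mem_erase]
      constructor
      · rintro ⟨⟨i, hi, rfl⟩, hsC⟩
        exact ⟨i, ⟨fun h => hsC (Finset.mem_singleton.mpr h.symm), hi⟩, rfl⟩
      · rintro ⟨i, ⟨his, hi⟩, rfl⟩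
        exact ⟨⟨i, hi, rfl⟩, fun h => his (Finset.mem_singleton.mp h).symm⟩
    clusters_succ := by
      intro k h1 h2
      rw [hcard'] at h2
      ext C
      simp only [Set.mem_setOf_eq]
      constructor
      · rintro ⟨hC, hsC⟩
        rw [W.clusters_succ k (by omega) (by omega)] at hC
        obtain ⟨A1, B1, hadj, rfl⟩ := hC
        exact ⟨A1, B1, ⟨hadj, fun h => hsC (Finset.mem_union_left _ h),
          fun h => hsC (Finset.mem_union_right _ h)⟩, rfl⟩
      · rintro ⟨A1, B1, ⟨hadj, hs1, hs2⟩, rfl⟩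
        refine ⟨?_, ?_⟩
        · rw [W.clusters_succ k (by omega) (by omega)]
          exact ⟨A1, B1, hadj, rfl⟩
        · intro h
          rcases Finset.mem_union.mp h with h | h
          · exact hs1 h
          · exact hs2 h
    card_inter_of_adj := by
      intro k h1 h2 C D h
      rw [hcard'] at h2
      exact W.card_inter_of_adj k h1 (by omega) C D h.1
    isTree := by
      intro k h1 h2'
      have h2 : k ≤ n - 2 := by rw [hcard'] at h2'; omega
      have hkS : k ≤ S.card - 1 := by omega
      have htree : (vineGraph W k).IsTree := W.isTree k h1 hkS
      obtain ⟨X, ⟨hXmem, hXs⟩, hXuniq⟩ := keyP k h1 (by omega)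
      have hleaf := keyQ k h1 h2
      have hne : ∃ C, C ∈ W.clusters k ∧ s ∉ C := by
        have hd : (W.clusters k \ {X}).ncard = n - k := by
          rw [Set.ncard_diff_singleton_of_mem hXmem,
            W.ncard_clusters k h1 hkS, hS]
          omega
        obtain ⟨C, hC, hCX⟩ := Set.nonempty_of_ncard_ne_zero
          (show (W.clusters k \ {X}).ncard ≠ 0 by rw [hd]; omega)
        exact ⟨C, hC, fun hsC => hCX (hXuniq C ⟨hC, hsC⟩)⟩
      obtain ⟨C0, hC0, hsC0⟩ := hne
      constructor
      · -- Connected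
        haveI : Nonempty ↥{C | C ∈ W.clusters k ∧ s ∉ C} := ⟨⟨C0, hC0, hsC0⟩⟩
        refine ⟨fun u v => ?_⟩
        obtain ⟨w0⟩ := htree.isConnected.preconnected ⟨u.1, u.2.1⟩ ⟨v.1, v.2.1⟩
        set p := w0.toPath with hp
        have hxu : (⟨X, hXmem⟩ : ↥(W.clusters k)) ≠ ⟨u.1, u.2.1⟩ :=
          fun h => u.2.2 ((congrArg Subtype.val h) ▸ hXs)
        have hxv : (⟨X, hXmem⟩ : ↥(W.clusters k)) ≠ ⟨v.1, v.2.1⟩ :=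
          fun h => v.2.2 ((congrArg Subtype.val h) ▸ hXs)
        have hxsupport : (⟨X, hXmem⟩ : ↥(W.clusters k)) ∉ p.1.support :=
          vine_aux_leaf_not_mem_path p.1 p.2
            (fun z z' hz hz' => Subtype.ext (hleaf X z.1 z'.1 hXs hz hz')) hxu hxv
        have havoid : ∀ z ∈ p.1.support, z.1 ∈ W.clusters k ∧ s ∉ z.1 := by
          intro z hz
          refine ⟨z.2, fun hsz => hxsupport ?_⟩
          rwa [show (⟨X, hXmem⟩ : ↥(W.clusters k)) = z from
            Subtype.ext (hXuniq z.1 ⟨z.2, hsz⟩).symm]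
        refine vine_aux_reach (vineGraph W k) _
          (fun a b ha hb h => ?_) p.1 havoid u.2 v.2
        exact ⟨h, ha.2, hb.2⟩
      · -- Acyclic
        intro v c hc
        have hinjφ : Function.Injective
            (fun v : ↥{C | C ∈ W.clusters k ∧ s ∉ C} =>
              (⟨v.1, v.2.1⟩ : ↥(W.clusters k))) :=
          fun a b h => by
            apply Subtype.ext
            have h2 := congrArg Subtype.val h
            simpa using h2
        refine htree.IsAcyclic (c.map ⟨fun v => ⟨v.1, v.2.1⟩, ?_⟩) ?_
        · exact fun h => h.1
        · exact (SimpleGraph.Walk.map_isCycle_iff_of_injective hinjφ).mpr hc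
    }, fun k _ _ => rfl, fun k _ _ C D => Iff.rfl⟩
end

section
/- Let (T_1,…,T_{n−1}) be a vine on n ≥ 2 variables. Construct an ordering r_1,…,r_n recursively as follows: if n = 2, let r_1, r_2 be the two variables in either order; if n ≥ 3, choose r_1 to be either of the two elements of the symmetric difference of the two clusters of T_{n−1}, remove from each T_k (1 ≤ k ≤ n−2) the unique leaf cluster containing r_1 together with its incident edge and discard T_{n−1} (obtaining a vine on the remaining n−1 variables), and let r_2,…,r_n be an ordering obtained recursively from this smaller vine. Then every ordering r_1,…,r_n obtained this way is a perfect elimination ordering of the chordal graph representation of every tree T_1,…,T_{n−1} of the original vine. -/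
/-- The chordal graph representation of the tree `T_k` of a vine: two distinct
variables are adjacent if and only if some cluster of `T_k` contains both. -/
def Vine.repGraph {α : Type*} [DecidableEq α] {S : Finset α} (W : Vine α S) (k : ℕ) :
    SimpleGraph α where
  Adj x y := x ≠ y ∧ ∃ A ∈ W.clusters k, x ∈ A ∧ y ∈ A
  symm := by
    constructor
    rintro x y ⟨hne, A, hA, hx, hy⟩
    exact ⟨hne.symm, A, hA, hy, hx⟩
  loopless := ⟨fun x h => h.1 rfl⟩

/-- The list `r = [r_1, …, r_n]` is a *perfect elimination ordering* of `G`: for every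
`i`, the neighbours of `r_i` among the later entries `r_j`, `j > i`, form a clique. -/
def IsListPEO {α : Type*} (G : SimpleGraph α) (r : List α) : Prop :=
  ∀ i : Fin r.length,
    G.IsClique {w | G.Adj (r.get i) w ∧ ∃ j : Fin r.length, i < j ∧ r.get j = w}

/-- The orderings `r_1, …, r_n` of the variables of a vine produced by the recursive
procedure: if `n = 2`, take the two variables in either order; if `n ≥ 3`, take as
`r_1` either element `s` of the symmetric difference of the two clusters of `T_(n-1)`,
remove from each `T_k` (`1 ≤ k ≤ n - 2`) the unique leaf cluster containing `s`
together with its incident edge, discard `T_(n-1)` (obtaining a vine on the remaining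
`n - 1` variables), and continue recursively on this smaller vine. -/
inductive VineOrder {α : Type*} [DecidableEq α] :
    (S : Finset α) → Vine α S → List α → Prop
  | base (S : Finset α) (W : Vine α S) (r : List α)
      (hcard : S.card = 2) (hnd : r.Nodup) (hr : r.toFinset = S) :
      VineOrder S W r
  | step (S : Finset α) (W : Vine α S) (s : α) (A B : Finset α) (r : List α)
      (W' : Vine α (S.erase s))
      (hcard : 3 ≤ S.card)
      (hA : A ∈ W.clusters (S.card - 1)) (hB : B ∈ W.clusters (S.card - 1))
      (hAB : A ≠ B)
      (hs : s ∈ (A ∪ B) \ (A ∩ B))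
      (hcl : ∀ k, 1 ≤ k → k ≤ S.card - 2 →
        W'.clusters k = {C | C ∈ W.clusters k ∧ s ∉ C})
      (hadj : ∀ k, 1 ≤ k → k ≤ S.card - 2 →
        ∀ C D, (W'.adj k C D ↔ W.adj k C D ∧ s ∉ C ∧ s ∉ D))
      (hrec : VineOrder (S.erase s) W' r) :
      VineOrder S W (s :: r)

private lemma exists_adj_of_reachable_ne' {V : Type*} {G : SimpleGraph V} {a b : V}
    (h : G.Reachable a b) (hne : a ≠ b) : ∃ c, G.Adj a c := by
  obtain ⟨w⟩ := h
  cases w with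
  | nil => exact absurd rfl hne
  | cons h _ => exact ⟨_, h⟩

lemma vineOrder_nodup_toFinset {α : Type*} [DecidableEq α] {S : Finset α} {W : Vine α S}
    {r : List α} (h : VineOrder S W r) : r.Nodup ∧ r.toFinset = S := by
  induction h with
  | base S W r hcard hnd hr => exact ⟨hnd, hr⟩
  | step S W s A B r W' hcard hA hB hAB hs hcl hadj hrec ih =>
    obtain ⟨hnd, hfin⟩ := ih
    have hsS : s ∈ S := by
      have h1 := W.subset_of_mem_clusters _ A hA
      have h2 := W.subset_of_mem_clusters _ B hB
      rcases Finset.mem_union.1 (Finset.mem_sdiff.1 hs).1 with h | h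
      exacts [h1 h, h2 h]
    have hsr : s ∉ r := fun hmem => by
      have : s ∈ S.erase s := hfin ▸ List.mem_toFinset.2 hmem
      simp at this
    refine ⟨List.nodup_cons.2 ⟨hsr, hnd⟩, ?_⟩
    rw [List.toFinset_cons, hfin]
    exact Finset.insert_erase hsS

theorem vineOrder_aux {α : Type*} [DecidableEq α] {S : Finset α} {W : Vine α S}
    {r : List α} (hr : VineOrder S W r) :
    ∀ k, 1 ≤ k → k ≤ S.card - 1 → IsListPEO (W.repGraph k) r := by
  induction hr with
  | base S W r hcard hnd hrr =>
    intro k hk1 hk2 i x hx y hy hne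
    have hk : k = 1 := by omega
    subst hk
    obtain ⟨⟨hnex, C, hC, hx1, hx2⟩, -⟩ := hx
    rw [W.clusters_one] at hC
    obtain ⟨i0, -, rfl⟩ := hC
    simp only [Finset.mem_singleton] at hx1 hx2
    exact absurd (hx1.trans hx2.symm) hnex
  | step S W s A B r W' hcard hA hB hAB hs hcl hadjW hrec ih =>
    obtain ⟨hnd, hfin⟩ := vineOrder_nodup_toFinset hrec
    have hsS : s ∈ S := by
      have h1 := W.subset_of_mem_clusters _ A hA
      have h2 := W.subset_of_mem_clusters _ B hB
      rcases Finset.mem_union.1 (Finset.mem_sdiff.1 hs).1 with h | h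
      exacts [h1 h, h2 h]
    have hsr : s ∉ r := fun hmem => by
      have : s ∈ S.erase s := hfin ▸ List.mem_toFinset.2 hmem
      simp at this
    have hcerase : (S.erase s).card = S.card - 1 := Finset.card_erase_of_mem hsS
    intro k hk1 hk2
    -- entries of (s :: r) after position 0 lie in S.erase s
    have hget : ∀ (i : Fin (s :: r).length) (z : α),
        (∃ j : Fin (s :: r).length, i < j ∧ (s :: r).get j = z) → z ∈ S.erase s := by
      rintro i z ⟨j, hij, rfl⟩
      obtain ⟨jv, hjv⟩ := j
      cases jv with
      | zero => simp [Fin.lt_def] at hij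
      | succ m =>
        have hm : m < r.length := by simpa using hjv
        have hgz : (s :: r).get ⟨m + 1, hjv⟩ = r.get ⟨m, hm⟩ := rfl
        rw [hgz, ← hfin]
        exact List.mem_toFinset.2 (List.get_mem r ⟨m, hm⟩)
    rcases eq_or_lt_of_le hk2 with hktop | hklt
    · -- k = S.card - 1 : top tree
      rw [← hktop] at hA hB
      have hk2' : 2 ≤ k := by omega
      have hnc := W.ncard_clusters k hk1 hk2
      have hfinC : (W.clusters k).Finite := Set.finite_of_ncard_ne_zero (by omega)
      have hclAB : W.clusters k = {A, B} := by
        refine (Set.eq_of_subset_of_ncard_le ?_ ?_ hfinC).symm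
        · rintro C (rfl | rfl)
          exacts [hA, hB]
        · rw [hnc, Set.ncard_pair hAB]; omega
      have htree := W.isTree k hk1 hk2
      have hadjAB : W.adj k A B := by
        have hreach := htree.isConnected.preconnected ⟨A, hA⟩ ⟨B, hB⟩
        have hneAB : (⟨A, hA⟩ : W.clusters k) ≠ ⟨B, hB⟩ :=
          fun h => hAB (congrArg Subtype.val h)
        obtain ⟨c, hcadj⟩ := exists_adj_of_reachable_ne' hreach hneAB
        have hc1 : c.1 ∈ ({A, B} : Set (Finset α)) := hclAB ▸ c.2
        have hcneA : c.1 ≠ A := fun h => W.adj_ne k A c.1 hcadj h.symm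
        rcases hc1 with h | h
        · exact absurd h hcneA
        · have : W.adj k A c.1 := hcadj
          rwa [h] at this
      have hcA : A.card = k := W.card_of_mem_clusters k hk1 hk2 A hA
      have hcB : B.card = k := W.card_of_mem_clusters k hk1 hk2 B hB
      have hcI : (A ∩ B).card = k - 1 := W.card_inter_of_adj k hk1 hk2 A B hadjAB
      have hUsub : A ∪ B ⊆ S := Finset.union_subset
        (W.subset_of_mem_clusters _ A hA) (W.subset_of_mem_clusters _ B hB)
      have hUcard := Finset.card_union_add_card_inter A B
      have hUS : A ∪ B = S := Finset.eq_of_subset_of_card_le hUsub (by omega)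
      have hse : ∃ C ∈ W.clusters k, C = S.erase s := by
        have hsnI : s ∉ A ∩ B := (Finset.mem_sdiff.1 hs).2
        rcases Finset.mem_union.1 (Finset.mem_sdiff.1 hs).1 with hsA | hsB
        · have hsB : s ∉ B := fun h => hsnI (Finset.mem_inter.2 ⟨hsA, h⟩)
          refine ⟨B, hB, Finset.eq_of_subset_of_card_le ?_ (by omega)⟩
          intro x hx
          exact Finset.mem_erase.2 ⟨fun h => hsB (h ▸ hx),
            hUS ▸ Finset.mem_union_right A hx⟩
        · have hsA : s ∉ A := fun h => hsnI (Finset.mem_inter.2 ⟨h, hsB⟩)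
          refine ⟨A, hA, Finset.eq_of_subset_of_card_le ?_ (by omega)⟩
          intro x hx
          exact Finset.mem_erase.2 ⟨fun h => hsA (h ▸ hx),
            hUS ▸ Finset.mem_union_left B hx⟩
      obtain ⟨C, hC, hCe⟩ := hse
      intro i x hx y hy hne
      have hxE : x ∈ S.erase s := hget i x hx.2
      have hyE : y ∈ S.erase s := hget i y hy.2
      exact ⟨hne, C, hC, hCe ▸ hxE, hCe ▸ hyE⟩
    · -- 1 ≤ k ≤ S.card - 2 : use the induction hypothesis
      have hk2'' : k ≤ S.card - 2 := by omega
      have hk2e : k ≤ (S.erase s).card - 1 := by omega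
      have hclk := hcl k hk1 hk2''
      have hsubW' : W'.clusters k ⊆ W.clusters k := by
        rw [hclk]; intro C hC; exact hC.1
      have hn1 := W.ncard_clusters k hk1 hk2
      have hn2 := W'.ncard_clusters k hk1 hk2e
      rw [hcerase] at hn2
      have hfinC : (W.clusters k).Finite := Set.finite_of_ncard_ne_zero (by omega)
      have hfinC' : (W'.clusters k).Finite := hfinC.subset hsubW'
      have hdiff : W.clusters k \ W'.clusters k = {C | C ∈ W.clusters k ∧ s ∈ C} := by
        ext C
        simp only [hclk, Set.mem_diff, Set.mem_setOf_eq]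
        tauto
      have hone : ({C | C ∈ W.clusters k ∧ s ∈ C} : Set (Finset α)).ncard = 1 := by
        rw [← hdiff, Set.ncard_diff hsubW' hfinC', hn1, hn2]; omega
      obtain ⟨Cs, hCsEq⟩ := Set.ncard_eq_one.1 hone
      have hCs : Cs ∈ W.clusters k ∧ s ∈ Cs := by
        have : Cs ∈ ({Cs} : Set (Finset α)) := rfl
        rw [← hCsEq] at this
        exact this
      have huniq : ∀ C, C ∈ W.clusters k → s ∈ C → C = Cs := fun C h1 h2 => by
        have : C ∈ ({C | C ∈ W.clusters k ∧ s ∈ C} : Set (Finset α)) := ⟨h1, h2⟩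
        rw [hCsEq] at this
        exact this
      -- transfer of adjacency
      have hW'W : ∀ x y : α, (W'.repGraph k).Adj x y → (W.repGraph k).Adj x y := by
        rintro x y ⟨hne, C, hC, hx, hy⟩
        exact ⟨hne, C, hsubW' hC, hx, hy⟩
      have hWW' : ∀ x y : α, x ≠ s → y ≠ s →
          (W.repGraph k).Adj x y → (W'.repGraph k).Adj x y := by
        rintro x y hxs hys ⟨hne, C, hC, hx, hy⟩
        by_cases hsC : s ∈ C
        · -- C is the unique cluster containing s; use its tree neighbour
          have huniqC : ∀ D, D ∈ W.clusters k → s ∈ D → D = C :=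
            fun D h1 h2 => (huniq D h1 h2).trans (huniq C hC hsC).symm
          have htree := W.isTree k hk1 hk2
          obtain ⟨D0, hD0'⟩ :=
            Set.nonempty_of_ncard_ne_zero (s := W'.clusters k) (by omega)
          have hD0W : D0 ∈ W.clusters k := hsubW' hD0'
          have hD0s : s ∉ D0 := by rw [hclk] at hD0'; exact hD0'.2
          have hreach := htree.isConnected.preconnected ⟨C, hC⟩ ⟨D0, hD0W⟩
          have hneCD0 : (⟨C, hC⟩ : W.clusters k) ≠ ⟨D0, hD0W⟩ := fun h => by
            have : C = D0 := congrArg Subtype.val h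
            exact hD0s (this ▸ hsC)
          obtain ⟨c, hcadj⟩ := exists_adj_of_reachable_ne' hreach hneCD0
          have hDW : c.1 ∈ W.clusters k := c.2
          have hcadj' : W.adj k C c.1 := hcadj
          have hDs : s ∉ c.1 :=
            fun h => (W.adj_ne k C c.1 hcadj') ((huniqC c.1 hDW h).symm)
          have hcard1 : C.card = k := W.card_of_mem_clusters k hk1 hk2 C hC
          have hcard2 : (C ∩ c.1).card = k - 1 := W.card_inter_of_adj k hk1 hk2 C c.1 hcadj'
          have hsubE : C.erase s ⊆ C ∩ c.1 → True := fun _ => trivial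
          have hsubE' : C ∩ c.1 ⊆ C.erase s := by
            intro z hz
            obtain ⟨hz1, hz2⟩ := Finset.mem_inter.1 hz
            exact Finset.mem_erase.2 ⟨fun h => hDs (h ▸ hz2), hz1⟩
          have hEeq : C ∩ c.1 = C.erase s :=
            Finset.eq_of_subset_of_card_le hsubE'
              (by rw [Finset.card_erase_of_mem hsC, hcard1, hcard2])
          have hxD : x ∈ c.1 := by
            have hxe : x ∈ C.erase s := Finset.mem_erase.2 ⟨hxs, hx⟩
            rw [← hEeq] at hxe
            exact (Finset.mem_inter.1 hxe).2
          have hyD : y ∈ c.1 := by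
            have hye : y ∈ C.erase s := Finset.mem_erase.2 ⟨hys, hy⟩
            rw [← hEeq] at hye
            exact (Finset.mem_inter.1 hye).2
          refine ⟨hne, c.1, ?_, hxD, hyD⟩
          rw [hclk]
          exact ⟨hDW, hDs⟩
        · refine ⟨hne, C, ?_, hx, hy⟩
          rw [hclk]
          exact ⟨hC, hsC⟩
      -- now the PEO property
      intro i
      obtain ⟨iv, hiv⟩ := i
      cases iv with
      | zero =>
        intro x hx y hy hne
        obtain ⟨hxadj, -⟩ := hx
        obtain ⟨hyadj, -⟩ := hy
        obtain ⟨hnex, Cx, hCx, hsx, hxx⟩ := hxadj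
        obtain ⟨hney, Cy, hCy, hsy, hyy⟩ := hyadj
        have hCxs : Cx = Cs := huniq Cx hCx hsx
        have hCys : Cy = Cs := huniq Cy hCy hsy
        exact ⟨hne, Cs, hCs.1, hCxs ▸ hxx, hCys ▸ hyy⟩
      | succ m =>
        have hm : m < r.length := by simpa using hiv
        have hIH := ih k hk1 hk2e ⟨m, hm⟩
        have key : ∀ z : α,
            ((W.repGraph k).Adj ((s :: r).get ⟨m + 1, hiv⟩) z ∧
              ∃ j : Fin (s :: r).length, (⟨m + 1, hiv⟩ : Fin (s :: r).length) < j ∧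
                (s :: r).get j = z) →
            z ∈ {w | (W'.repGraph k).Adj (r.get ⟨m, hm⟩) w ∧
              ∃ j : Fin r.length, (⟨m, hm⟩ : Fin r.length) < j ∧ r.get j = w} := by
          rintro z ⟨hadjz, j, hij, rfl⟩
          obtain ⟨jv, hjv⟩ := j
          have hij' : m + 1 < jv := hij
          cases jv with
          | zero => omega
          | succ p =>
            have hp : p < r.length := by simpa using hjv
            have hgz : (s :: r).get ⟨p + 1, hjv⟩ = r.get ⟨p, hp⟩ := rfl
            rw [hgz] at hadjz ⊢
            have hzs : r.get ⟨p, hp⟩ ≠ s := fun h => hsr (h ▸ List.get_mem r ⟨p, hp⟩)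
            have hms : r.get ⟨m, hm⟩ ≠ s := fun h => hsr (h ▸ List.get_mem r ⟨m, hm⟩)
            have hgm : (s :: r).get ⟨m + 1, hiv⟩ = r.get ⟨m, hm⟩ := rfl
            rw [hgm] at hadjz
            refine ⟨hWW' _ _ hms hzs hadjz, ⟨p, hp⟩, ?_, rfl⟩
            exact Fin.mk_lt_mk.2 (by omega)
        intro x hx y hy hne
        exact hW'W x y (hIH (key x hx) (key y hy) hne)

/-- Every ordering of the variables of a vine on `n ≥ 2` variables obtained by the
recursive leaf-removal procedure is a perfect elimination ordering of the chordal graph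
representation of every tree `T_1, …, T_(n-1)` of the original vine. -/
theorem vineOrder_isPerfectEliminationOrdering {α : Type*} [DecidableEq α]
    (S : Finset α) (hS : 2 ≤ S.card) (W : Vine α S) (r : List α)
    (hr : VineOrder S W r) :
    ∀ k, 1 ≤ k → k ≤ S.card - 1 → IsListPEO (W.repGraph k) r := by
  intro k hk1 hk2
  exact vineOrder_aux hr k hk1 hk2
end
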